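/- arXiv:2504.09320 — 2 statements merged into one kernel-verified Lean document; each statement's English description precedes it below -/
import Mathlib

section
/- Let n ≥ 1 be an integer, θ ∈ (0, π/2], and let K be a θ-capillary convex body in ℝ^{n+1} with capillary support function s(ζ) = h_K(ζ + cos θ E_{n+1}). If C > 0 and |s(ζ)| ≤ C for all ζ ∈ C_θ, then |h_K(u)| ≤ C / sin θ for every unit vector u ∈ ℝ^{n+1}. -/
open MeasureTheory Real Set
open scoped RealInnerProductSpace

noncomputable section

abbrev V (n : ℕ) := EuclideanSpace ℝ (Fin (n + 1))

/-- The vertical unit vector `E_{n+1}`. -/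
def Etop (n : ℕ) : V n := EuclideanSpace.single (Fin.last n) 1

/-- The spherical cap `S^n_θ`. -/
def sphCap (n : ℕ) (θ : ℝ) : Set (V n) :=
  {u | ‖u‖ = 1 ∧ Real.cos θ ≤ u (Fin.last n)}

/-- The boundary circle `∂S^n_θ`. -/
def sphCapBdry (n : ℕ) (θ : ℝ) : Set (V n) :=
  {u | ‖u‖ = 1 ∧ u (Fin.last n) = Real.cos θ}

/-- The capillary cap `C_θ`. -/
def capCap (n : ℕ) (θ : ℝ) : Set (V n) :=
  {ζ | 0 ≤ ζ (Fin.last n) ∧ ‖ζ + Real.cos θ • Etop n‖ = 1}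

/-- The open cone over `S^n_θ`. -/
def coneCap (n : ℕ) (θ : ℝ) : Set (V n) :=
  {x | ∃ l : ℝ, 0 < l ∧ ∃ u ∈ sphCap n θ, x = l • u}

/-- `G` is a positively 1-homogeneous extension of `g : C_θ → ℝ` which is `C^m` on an
open neighborhood of the cone over `S^n_θ`. -/
def IsHomExt (n : ℕ) (θ : ℝ) (m : ℕ∞) (g G : V n → ℝ) : Prop :=
  (∃ U : Set (V n), IsOpen U ∧ coneCap n θ ⊆ U ∧ ContDiffOn ℝ m G U) ∧
  (∀ l : ℝ, 0 < l → ∀ u ∈ sphCap n θ, G (l • u) = l * G u) ∧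
  (∀ ζ ∈ capCap n θ, G (ζ + Real.cos θ • Etop n) = g ζ)

/-- The Hessian of `G` at `u` as a quadratic/bilinear form. -/
def hessQ (n : ℕ) (G : V n → ℝ) (u v w : V n) : ℝ :=
  fderiv ℝ (fderiv ℝ G) u v w

/-- The Hessian matrix `D²G(u)` in the standard coordinates. -/
def hessM (n : ℕ) (G : V n → ℝ) (u : V n) : Matrix (Fin (n + 1)) (Fin (n + 1)) ℝ :=
  fun i j => fderiv ℝ (fderiv ℝ G) u (EuclideanSpace.single i 1) (EuclideanSpace.single j 1)

/-- `σ_j` of the eigenvalues of `D²G(u)` (via characteristic polynomial coefficients). -/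
def sigmaElem (n : ℕ) (j : ℕ) (G : V n → ℝ) (u : V n) : ℝ :=
  (-1 : ℝ) ^ j * ((hessM n G u).charpoly.coeff (n + 1 - j))

/-- `τ[g] ≥ 0` : the Hessian of the extension is positive semidefinite on `S^n_θ`. -/
def TauNonneg (n : ℕ) (θ : ℝ) (G : V n → ℝ) : Prop :=
  ∀ u ∈ sphCap n θ, ∀ v : V n, 0 ≤ hessQ n G u v v

/-- `τ[g] > 0`. -/
def TauPos (n : ℕ) (θ : ℝ) (G : V n → ℝ) : Prop :=
  TauNonneg n θ G ∧
  ∀ u ∈ sphCap n θ, ∀ v : V n, v ≠ 0 → ⟪v, u⟫ = 0 → 0 < hessQ n G u v v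

/-- Capillary (Robin) boundary condition: `∂_{n+1}G = 0` on `∂S^n_θ`. -/
def IsCapillaryF (n : ℕ) (θ : ℝ) (G : V n → ℝ) : Prop :=
  ∀ u ∈ sphCapBdry n θ, fderiv ℝ G u (Etop n) = 0

/-- Reflection negating the horizontal coordinates. -/
def horizNeg (n : ℕ) (ζ : V n) : V n := (2 * ζ (Fin.last n)) • Etop n - ζ

/-- Support function of a set. -/
def suppFn (n : ℕ) (K : Set (V n)) (u : V n) : ℝ := sSup ((fun y => ⟪u, y⟫) '' K)

/-- Relative interior (within the hyperplane `{x_{n+1}=0}`) of the base `K ∩ {x_{n+1}=0}`. -/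
def relintBase (n : ℕ) (K : Set (V n)) : Set (V n) :=
  {x | x (Fin.last n) = 0 ∧ ∃ ε > 0, ∀ y : V n, y (Fin.last n) = 0 → ‖y - x‖ < ε → y ∈ K}

/-- A `θ`-capillary convex body. -/
def IsCapBody (n : ℕ) (θ : ℝ) (K : Set (V n)) : Prop :=
  IsCompact K ∧ Convex ℝ K ∧ (interior K).Nonempty ∧
  (∀ x ∈ K, 0 ≤ x (Fin.last n)) ∧
  (∀ x ∈ K, 0 < x (Fin.last n) → ∀ u : V n, ‖u‖ = 1 → ⟪u, x⟫ = suppFn n K u →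
    Real.cos θ ≤ u (Fin.last n)) ∧
  (∀ v : V n, ‖v‖ = 1 → v (Fin.last n) = 0 →
    suppFn n K (Real.sin θ • v + Real.cos θ • Etop n) = Real.sin θ * suppFn n K v) ∧
  (relintBase n K).Nonempty

/-- `ψ` is one of `x²`, `x^p (p<0)`, `-log x`. -/
def PsiOK (ψ : ℝ → ℝ) : Prop :=
  (ψ = fun x : ℝ => x ^ 2) ∨ (∃ p : ℝ, p < 0 ∧ ψ = fun x : ℝ => x ^ p) ∨
    (ψ = fun x : ℝ => -Real.log x)


lemma Etop_norm (n : ℕ) : ‖Etop n‖ = 1 := by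
  simp [Etop]

lemma inner_Etop (n : ℕ) (x : V n) : ⟪Etop n, x⟫ = x (Fin.last n) := by
  simp [Etop, EuclideanSpace.inner_single_left]

lemma le_suppFn (n : ℕ) (K : Set (V n)) (hK : IsCompact K) {x : V n} (hx : x ∈ K) (u : V n) :
    ⟪u, x⟫ ≤ suppFn n K u := by
  refine le_csSup ((hK.image ?_).bddAbove) ⟨x, hx, rfl⟩
  exact continuous_const.inner continuous_id

lemma exists_max (n : ℕ) (K : Set (V n)) (hc : IsCompact K) (hne : K.Nonempty) (u : V n) :
    ∃ x ∈ K, ⟪u, x⟫ = suppFn n K u := by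
  have hcont : Continuous (fun y : V n => (⟪u, y⟫ : ℝ)) := continuous_const.inner continuous_id
  obtain ⟨x, hxK, hmax⟩ := hc.exists_isMaxOn hne hcont.continuousOn
  refine ⟨x, hxK, le_antisymm (le_suppFn n K hc hxK u) ?_⟩
  refine csSup_le (hne.image _) ?_
  rintro y ⟨z, hz, rfl⟩
  exact hmax hz

lemma suppFn_le_aux (n : ℕ) (θ : ℝ) (hθ : θ ∈ Ioc 0 (π / 2))
    (K : Set (V n)) (hK : IsCapBody n θ K) (C : ℝ) (hC : 0 < C)
    (hs : ∀ ζ ∈ capCap n θ, |suppFn n K (ζ + Real.cos θ • Etop n)| ≤ C) :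
    ∀ u : V n, ‖u‖ = 1 → suppFn n K u ≤ C / Real.sin θ := by
  obtain ⟨hcomp, hconv, hint, hpos, hcap, hrob, hbase⟩ := hK
  have hsin : 0 < Real.sin θ :=
    Real.sin_pos_of_pos_of_lt_pi hθ.1 (by nlinarith [Real.pi_pos, hθ.2])
  have hcos : 0 ≤ Real.cos θ :=
    Real.cos_nonneg_of_mem_Icc ⟨by nlinarith [hθ.1, Real.pi_pos], hθ.2⟩
  have hsin1 : Real.sin θ ≤ 1 := Real.sin_le_one θ
  have hCs : C ≤ C / Real.sin θ := by
    rw [le_div_iff₀ hsin]; nlinarith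
  have hne : K.Nonempty := hint.mono interior_subset
  intro u hu
  by_cases hcase : Real.cos θ ≤ u (Fin.last n)
  · have hmem : u - Real.cos θ • Etop n ∈ capCap n θ := by
      constructor
      · have : (u - Real.cos θ • Etop n) (Fin.last n) = u (Fin.last n) - Real.cos θ := by
          simp [Etop, EuclideanSpace.single_apply]
        rw [this]; linarith
      · rw [sub_add_cancel, hu]
    have h1 := hs _ hmem
    rw [sub_add_cancel] at h1
    exact le_trans (le_trans (le_abs_self _) h1) hCs
  · push_neg at hcase
    obtain ⟨x, hxK, hxe⟩ := exists_max n K hcomp hne u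
    have hx0 : x (Fin.last n) = 0 := by
      rcases eq_or_lt_of_le (hpos x hxK) with h | h
      · exact h.symm
      · exact absurd (hcap x hxK h u hu hxe) (not_le.mpr hcase)
    set u' := u - u (Fin.last n) • Etop n with hu'def
    have hip : ⟪u, x⟫ = ⟪u', x⟫ := by
      rw [hu'def, inner_sub_left, real_inner_smul_left]
      rw [show ⟪Etop n, x⟫ = x (Fin.last n) from inner_Etop n x, hx0, mul_zero, sub_zero]
    by_cases hz : u' = 0
    · rw [← hxe, hip, hz, inner_zero_left]; positivity
    · have hr : 0 < ‖u'‖ := norm_pos_iff.mpr hz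
      set v := ‖u'‖⁻¹ • u' with hvdef
      have hv1 : ‖v‖ = 1 := by
        rw [hvdef, norm_smul, norm_inv, norm_norm, inv_mul_cancel₀ hr.ne']
      have hv0 : v (Fin.last n) = 0 := by
        simp [hvdef, hu'def, Etop, EuclideanSpace.single_apply]
      -- bound on suppFn v
      have hwmem : (Real.sin θ • v) ∈ capCap n θ := by
        constructor
        · simp [hv0]
        · have hsq : ‖Real.sin θ • v + Real.cos θ • Etop n‖ ^ 2 = 1 := by
            have h1 : ⟪Real.sin θ • v, Real.cos θ • Etop n⟫ = 0 := by
              rw [real_inner_smul_left, real_inner_smul_right, real_inner_comm,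
                inner_Etop, hv0]
              ring
            have h2 : ‖Real.sin θ • v‖ = Real.sin θ := by
              rw [norm_smul, hv1, mul_one, Real.norm_eq_abs, abs_of_pos hsin]
            have h3 : ‖Real.cos θ • Etop n‖ = Real.cos θ := by
              rw [norm_smul, Etop_norm, mul_one, Real.norm_eq_abs, abs_of_nonneg hcos]
            rw [norm_add_sq_real, h1, h2, h3]
            nlinarith [Real.sin_sq_add_cos_sq θ]
          nlinarith [norm_nonneg (Real.sin θ • v + Real.cos θ • Etop n)]
      have h1 := hs _ hwmem
      rw [hrob v hv1 hv0] at h1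
      have hvb : suppFn n K v ≤ C / Real.sin θ := by
        rw [le_div_iff₀ hsin, mul_comm]
        exact le_trans (le_abs_self _) h1
      -- conclude
      have hru : ‖u'‖ ≤ 1 := by
        have hsq : ‖u'‖ ^ 2 = 1 - u (Fin.last n) ^ 2 := by
          rw [hu'def, norm_sub_sq_real, real_inner_smul_right, real_inner_comm,
            inner_Etop, norm_smul, Etop_norm, hu]
          simp [sq_abs]; ring
        nlinarith
      have hvx : ⟪v, x⟫ ≤ suppFn n K v := le_suppFn n K hcomp hxK v
      have hux : ⟪u', x⟫ = ‖u'‖ * ⟪v, x⟫ := by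
        rw [hvdef, real_inner_smul_left]; field_simp
      rw [← hxe, hip, hux]
      calc ‖u'‖ * ⟪v, x⟫ ≤ ‖u'‖ * (C / Real.sin θ) := by
            exact mul_le_mul_of_nonneg_left (le_trans hvx hvb) (norm_nonneg _)
        _ ≤ 1 * (C / Real.sin θ) := by
            apply mul_le_mul_of_nonneg_right hru; positivity
        _ = C / Real.sin θ := one_mul _

/-- bound on the standard support function from the capillary support
function. -/
theorem capillary_support_bound (n : ℕ) (hn : 1 ≤ n) (θ : ℝ) (hθ : θ ∈ Ioc 0 (π / 2))
    (K : Set (V n)) (hK : IsCapBody n θ K) (C : ℝ) (hC : 0 < C)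
    (hs : ∀ ζ ∈ capCap n θ, |suppFn n K (ζ + Real.cos θ • Etop n)| ≤ C) :
    ∀ u : V n, ‖u‖ = 1 → |suppFn n K u| ≤ C / Real.sin θ := by
  intro u hu
  have hupper := suppFn_le_aux n θ hθ K hK C hC hs
  have hne : K.Nonempty := hK.2.2.1.mono interior_subset
  obtain ⟨x₀, hx₀⟩ := hne
  rw [abs_le]
  refine ⟨?_, hupper u hu⟩
  have h1 : ⟪-u, x₀⟫ ≤ C / Real.sin θ :=
    le_trans (le_suppFn n K hK.1 hx₀ (-u)) (hupper (-u) (by rw [norm_neg, hu]))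
  have h2 : ⟪u, x₀⟫ ≤ suppFn n K u := le_suppFn n K hK.1 hx₀ u
  rw [inner_neg_left] at h1
  linarith
end
end

section
/- Let n ≥ 1 be an integer, θ ∈ (0, π) and C > 0. Let s be a C² capillary function on C_θ with τ[s] > 0 and 0 < s(ζ) ≤ C for all ζ ∈ C_θ, and let G be its positively 1-homogeneous extension. Then the spherical gradient of s is bounded by C / sin θ: for every u ∈ S^n_θ, ‖∇G(u) − G(u)·u‖ ≤ C / sin θ (equivalently, |∇̄s| ≤ C / sin θ on C_θ). -/
open MeasureTheory Real Set
open scoped RealInnerProductSpace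

noncomputable section

/-!
On the open cone over the interior of `S^n_θ` the Hessian of the `1`-homogeneous function `G`
is `(-1)`-homogeneous, so `τ[s] ≥ 0` makes `G` convex along every segment inside that cone.
Fix an interior point `u` of the cap and put `T = ∇G(u) - G(u) u`, which is orthogonal to `u`
by Euler's identity. Going up the vertical chord that starts on the boundary circle, where
`∂_{n+1}G = 0`, convexity gives `∂_{n+1}G(u) ≥ 0`. The unit vector
`v = sin θ • T / |T| + μ E_{n+1}` with `μ ≥ 0` and `v_{n+1} ≥ |cos θ|` lies in the cap and the
segment `[u, v]` stays in the cone, so the tangent-plane inequality at `u` gives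
`sin θ |T| ≤ DG(u) v ≤ G(v) ≤ C`. Boundary points of the cap follow by continuity.
-/

open Filter Topology

section Calculus

variable {E F : Type*} [NormedAddCommGroup E] [NormedSpace ℝ E] [NormedAddCommGroup F]
  [NormedSpace ℝ F] {f : E → ℝ} {a b : E}

lemma hasDerivAt_comp_lineMap {g : E → F} {t : ℝ} (hg : DifferentiableAt ℝ g (a + t • (b - a))) :
    HasDerivAt (fun t : ℝ => g (a + t • (b - a))) (fderiv ℝ g (a + t • (b - a)) (b - a)) t := by
  have hline : HasDerivAt (fun t : ℝ => a + t • (b - a)) (b - a) t := by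
    simpa using ((hasDerivAt_id t).smul_const (b - a)).const_add a
  exact hg.hasFDerivAt.comp_hasDerivAt t hline

lemma monotoneOn_fderiv_apply_lineMap (hf : ∀ x ∈ segment ℝ a b, ContDiffAt ℝ 2 f x)
    (hH : ∀ x ∈ openSegment ℝ a b, 0 ≤ fderiv ℝ (fderiv ℝ f) x (b - a) (b - a)) :
    MonotoneOn (fun t : ℝ => fderiv ℝ f (a + t • (b - a)) (b - a)) (Icc 0 1) := by
  have hderiv : ∀ t ∈ Icc (0 : ℝ) 1, HasDerivAt (fun t : ℝ => fderiv ℝ f (a + t • (b - a)) (b - a))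
      (fderiv ℝ (fderiv ℝ f) (a + t • (b - a)) (b - a) (b - a)) t := by
    intro t ht
    have hx : a + t • (b - a) ∈ segment ℝ a b := by rw [segment_eq_image']; exact ⟨t, ht, rfl⟩
    have h2 : DifferentiableAt ℝ (fderiv ℝ f) (a + t • (b - a)) :=
      ((hf _ hx).fderiv_right (m := 1) le_rfl).differentiableAt one_ne_zero
    exact (ContinuousLinearMap.apply ℝ ℝ (b - a)).hasFDerivAt.comp_hasDerivAt t
      (hasDerivAt_comp_lineMap h2)
  refine monotoneOn_of_hasDerivWithinAt_nonneg (convex_Icc 0 1)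
    (f' := fun t => fderiv ℝ (fderiv ℝ f) (a + t • (b - a)) (b - a) (b - a))
    (fun t ht => (hderiv t ht).continuousAt.continuousWithinAt) (fun t ht => ?_) (fun t ht => ?_)
  all_goals rw [interior_Icc] at ht
  · exact (hderiv t (Ioo_subset_Icc_self ht)).hasDerivWithinAt
  · exact hH _ (by rw [openSegment_eq_image']; exact ⟨t, ht, rfl⟩)

lemma fderiv_apply_sub_le_of_hessian_nonneg (hf : ∀ x ∈ segment ℝ a b, ContDiffAt ℝ 2 f x)
    (hH : ∀ x ∈ openSegment ℝ a b, 0 ≤ fderiv ℝ (fderiv ℝ f) x (b - a) (b - a)) :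
    fderiv ℝ f a (b - a) ≤ fderiv ℝ f b (b - a) := by
  simpa using monotoneOn_fderiv_apply_lineMap hf hH (left_mem_Icc.2 zero_le_one)
    (right_mem_Icc.2 zero_le_one) zero_le_one

lemma add_fderiv_apply_sub_le_of_hessian_nonneg (hf : ∀ x ∈ segment ℝ a b, ContDiffAt ℝ 2 f x)
    (hH : ∀ x ∈ openSegment ℝ a b, 0 ≤ fderiv ℝ (fderiv ℝ f) x (b - a) (b - a)) :
    f a + fderiv ℝ f a (b - a) ≤ f b := by
  have hderiv : ∀ t ∈ Icc (0 : ℝ) 1, HasDerivAt (fun t : ℝ => f (a + t • (b - a)))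
      (fderiv ℝ f (a + t • (b - a)) (b - a)) t := fun t ht =>
    hasDerivAt_comp_lineMap <|
      (hf _ (by rw [segment_eq_image']; exact ⟨t, ht, rfl⟩)).differentiableAt two_ne_zero
  have hmono := monotoneOn_fderiv_apply_lineMap hf hH
  have := (convex_Icc (0 : ℝ) 1).mul_sub_le_image_sub_of_le_deriv
    (fun t ht => (hderiv t ht).continuousAt.continuousWithinAt)
    (fun t ht => (hderiv t (interior_subset ht)).differentiableAt.differentiableWithinAt)
    (C := fderiv ℝ f a (b - a)) (fun t ht => by
      rw [(hderiv t (interior_subset ht)).deriv]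
      simpa using hmono (left_mem_Icc.2 zero_le_one) (interior_subset ht) (interior_subset ht).1)
    0 (left_mem_Icc.2 zero_le_one) 1 (right_mem_Icc.2 zero_le_one) zero_le_one
  simp only [sub_zero, mul_one, one_smul, zero_smul, add_zero, add_sub_cancel] at this
  linarith

lemma smul_fderiv_smul_eq_of_eventually {φ : E → F} {x : E} {l c : ℝ}
    (h : ∀ᶠ z in 𝓝 x, φ (l • z) = c • φ z) (hx : DifferentiableAt ℝ φ x)
    (hlx : DifferentiableAt ℝ φ (l • x)) :
    l • fderiv ℝ φ (l • x) = c • fderiv ℝ φ x := by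
  have hcomp : HasFDerivAt (fun z => φ (l • z))
      ((fderiv ℝ φ (l • x)).comp (l • ContinuousLinearMap.id ℝ E)) x :=
    hlx.hasFDerivAt.comp x ((hasFDerivAt_id x).const_smul l)
  have hscaled : HasFDerivAt (fun z => φ (l • z)) (c • fderiv ℝ φ x) x :=
    (hx.hasFDerivAt.const_smul c).congr_of_eventuallyEq h
  rw [← hcomp.unique hscaled]
  ext y
  simp

lemma fderiv_apply_self_of_homogeneous {G : E → ℝ} {x : E}
    (hG : ∀ l : ℝ, 0 < l → G (l • x) = l * G x) (hx : DifferentiableAt ℝ G x) :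
    fderiv ℝ G x x = G x := by
  have hray : HasDerivAt (fun l : ℝ => G (l • x)) (fderiv ℝ G x x) 1 := by
    simpa [Function.comp_def] using hx.hasFDerivAt.comp_hasDerivAt_of_eq 1
      ((hasDerivAt_id 1).smul_const x) (one_smul ℝ x).symm
  have hlin : HasDerivAt (fun l : ℝ => G (l • x)) (G x) 1 := by
    refine ((hasDerivAt_id 1).mul_const (G x)).congr_of_eventuallyEq ?_ |>.congr_deriv (one_mul _)
    filter_upwards [eventually_gt_nhds one_pos] with l hl using hG l hl
  exact hray.unique hlin

end Calculus

section UnitVectors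

variable {E : Type*} [NormedAddCommGroup E] [InnerProductSpace ℝ E]

lemma mul_norm_smul_add_smul_le {u v : E} (hu : ‖u‖ = 1) (hv : ‖v‖ = 1) {α β : ℝ}
    (hα : 0 ≤ α) (hβ : 0 ≤ β) (hαβ : α + β = 1) (c : ℝ) :
    c * ‖α • u + β • v‖ ≤ α * c + β * |c| := by
  rcases le_or_gt 0 c with hc | hc
  · have hle : ‖α • u + β • v‖ ≤ 1 := by
      calc ‖α • u + β • v‖ ≤ ‖α • u‖ + ‖β • v‖ := norm_add_le _ _
        _ = 1 := by rw [norm_smul, norm_smul, hu, hv, Real.norm_of_nonneg hα,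
                      Real.norm_of_nonneg hβ]; linarith
    rw [abs_of_nonneg hc]
    nlinarith
  · have hge : α - β ≤ ‖α • u + β • v‖ := by
      have := norm_sub_norm_le (α • u) (-(β • v))
      rwa [norm_neg, sub_neg_eq_add, norm_smul, norm_smul, hu, hv, Real.norm_of_nonneg hα,
        Real.norm_of_nonneg hβ, mul_one, mul_one] at this
    rw [abs_of_neg hc]
    nlinarith

lemma exists_nonneg_norm_smul_add_smul_eq_one {w e : E} (hw : ‖w‖ = 1) (he : ‖e‖ = 1)
    {s c : ℝ} (hsc : s ^ 2 + c ^ 2 = 1) :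
    ∃ μ : ℝ, 0 ≤ μ ∧ ‖s • w + μ • e‖ = 1 ∧ |c| ≤ ⟪s • w + μ • e, e⟫ := by
  set a := ⟪w, e⟫
  have ha : a ^ 2 ≤ 1 := by
    have := abs_real_inner_le_norm w e
    rw [hw, he, mul_one] at this
    nlinarith [abs_nonneg a, sq_abs a]
  set k := √(c ^ 2 + (s * a) ^ 2)
  have hk : k ^ 2 = c ^ 2 + (s * a) ^ 2 := Real.sq_sqrt (by positivity)
  have hinner : ⟪s • w + (k - s * a) • e, e⟫ = k := by
    rw [inner_add_left, real_inner_smul_left, real_inner_smul_left, real_inner_self_eq_norm_sq, he]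
    ring
  refine ⟨k - s * a, ?_, ?_, ?_⟩
  · exact sub_nonneg.2 ((le_abs_self _).trans (Real.abs_le_sqrt (by nlinarith)))
  · rw [← pow_eq_one_iff_of_nonneg (norm_nonneg _) two_ne_zero, norm_add_sq_real,
      real_inner_smul_left, real_inner_smul_right, norm_smul, norm_smul, hw, he,
      Real.norm_eq_abs, Real.norm_eq_abs]
    nlinarith [sq_abs s, sq_abs (k - s * a)]
  · rw [hinner]
    exact Real.abs_le_sqrt (by nlinarith)

end UnitVectors

lemma mul_lt_iff_lt_of_sq_eq {s c t N : ℝ} (hs : 0 < s) (hsc : s ^ 2 + c ^ 2 = 1) (hN : 0 ≤ N)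
    (hN2 : N ^ 2 = s ^ 2 + t ^ 2) : c * N < t ↔ c < t := by
  have hct : c * t ≤ N := by
    by_contra! h
    nlinarith [mul_self_lt_mul_self hN h, mul_nonneg (sq_nonneg t) (sq_nonneg s)]
  -- `t - c * N` and `t - c` differ by a positive factor
  have hfactor : (t - c * N) * (1 + N) = (t - c) * (1 + N - c * t - c ^ 2) := by
    linear_combination (-c) * hN2 - c * hsc
  rw [← sub_pos, ← sub_pos (a := t), ← mul_pos_iff_of_pos_right (by positivity : 0 < 1 + N),
    hfactor, mul_pos_iff_of_pos_right (by nlinarith)]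

section CapGeometry

variable {n : ℕ} {θ : ℝ}

@[simp] lemma inner_etop (y : V n) : ⟪y, Etop n⟫ = y (Fin.last n) := by
  simp [Etop, EuclideanSpace.inner_single_right]

@[simp] lemma etop_last : Etop n (Fin.last n) = 1 := by
  simp [Etop]

@[simp] lemma norm_etop : ‖Etop n‖ = 1 := by
  simp [Etop]

def openConeCap (n : ℕ) (θ : ℝ) : Set (V n) :=
  {x | Real.cos θ * ‖x‖ < x (Fin.last n)}

lemma isOpen_openConeCap : IsOpen (openConeCap n θ) :=
  isOpen_lt (continuous_const.mul continuous_norm) (EuclideanSpace.proj (Fin.last n)).continuous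

lemma smul_mem_openConeCap {x : V n} (hx : x ∈ openConeCap n θ) {l : ℝ} (hl : 0 < l) :
    l • x ∈ openConeCap n θ := by
  have : l * (Real.cos θ * ‖x‖) < l * x (Fin.last n) := mul_lt_mul_of_pos_left hx hl
  simp only [openConeCap, mem_ofPred_eq, norm_smul, Real.norm_of_nonneg hl.le, PiLp.smul_apply,
    smul_eq_mul]
  linarith

lemma mem_openConeCap_iff_of_norm_eq_one {u : V n} (hu : ‖u‖ = 1) :
    u ∈ openConeCap n θ ↔ Real.cos θ < u (Fin.last n) := by
  simp [openConeCap, hu]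

lemma ne_zero_of_mem_openConeCap {x : V n} (hx : x ∈ openConeCap n θ) : x ≠ 0 := by
  rintro rfl
  simp [openConeCap] at hx

lemma normalize_mem_sphCap_inter_openConeCap {x : V n} (hx : x ∈ openConeCap n θ) :
    ‖x‖⁻¹ • x ∈ sphCap n θ ∩ openConeCap n θ := by
  have hx0 := ne_zero_of_mem_openConeCap hx
  have hunit : ‖‖x‖⁻¹ • x‖ = 1 := norm_smul_inv_norm hx0
  have hmem := smul_mem_openConeCap hx (inv_pos.2 (norm_pos_iff.2 hx0))
  exact ⟨⟨hunit, ((mem_openConeCap_iff_of_norm_eq_one hunit).1 hmem).le⟩, hmem⟩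

lemma sphCap_subset_coneCap : sphCap n θ ⊆ coneCap n θ := fun u hu =>
  ⟨1, one_pos, u, hu, (one_smul ℝ u).symm⟩

lemma openConeCap_subset_coneCap : openConeCap n θ ⊆ coneCap n θ := fun x hx =>
  have hx0 := ne_zero_of_mem_openConeCap hx
  ⟨‖x‖, norm_pos_iff.2 hx0, ‖x‖⁻¹ • x, (normalize_mem_sphCap_inter_openConeCap hx).1,
    by rw [smul_inv_smul₀ (norm_ne_zero_iff.2 hx0)]⟩

lemma segment_subset_coneCap {a b : V n} (ha : a ∈ coneCap n θ) (hb : b ∈ coneCap n θ)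
    (hab : openSegment ℝ a b ⊆ openConeCap n θ) : segment ℝ a b ⊆ coneCap n θ := by
  rw [← insert_endpoints_openSegment]
  exact insert_subset ha (insert_subset hb (hab.trans openConeCap_subset_coneCap))

lemma norm_sq_smul_add_smul_etop {m : V n} (hm : ‖m‖ = 1) (hm_last : m (Fin.last n) = 0)
    (a t : ℝ) : ‖a • m + t • Etop n‖ ^ 2 = a ^ 2 + t ^ 2 := by
  rw [norm_add_sq_real, norm_smul, norm_smul, real_inner_smul_left, real_inner_smul_right,
    inner_etop, hm_last, hm, norm_etop, Real.norm_eq_abs, Real.norm_eq_abs]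
  simp [sq_abs]

lemma smul_add_smul_mem_openConeCap_iff (hθ : θ ∈ Ioo 0 π) {m : V n} (hm : ‖m‖ = 1)
    (hm_last : m (Fin.last n) = 0) (t : ℝ) :
    Real.sin θ • m + t • Etop n ∈ openConeCap n θ ↔ Real.cos θ < t := by
  have hlast : (Real.sin θ • m + t • Etop n) (Fin.last n) = t := by simp [hm_last]
  rw [openConeCap, mem_ofPred_eq, hlast]
  exact mul_lt_iff_lt_of_sq_eq (Real.sin_pos_of_pos_of_lt_pi hθ.1 hθ.2)
    (Real.sin_sq_add_cos_sq θ) (norm_nonneg _) (norm_sq_smul_add_smul_etop hm hm_last _ _)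

lemma openSegment_subset_openConeCap {u v : V n} (hu : u ∈ sphCap n θ)
    (hv : ‖v‖ = 1) (hv_last : |Real.cos θ| ≤ v (Fin.last n))
    (hstrict : Real.cos θ < u (Fin.last n) ∨ |Real.cos θ| < v (Fin.last n)) :
    openSegment ℝ u v ⊆ openConeCap n θ := by
  rintro _ ⟨α, β, hα, hβ, hαβ, rfl⟩
  have hle := mul_norm_smul_add_smul_le hu.1 hv hα.le hβ.le hαβ (Real.cos θ)
  have hlt : α * Real.cos θ + β * |Real.cos θ| < α * u (Fin.last n) + β * v (Fin.last n) := by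
    rcases hstrict with h | h <;> nlinarith [hu.2]
  simp only [openConeCap, mem_ofPred_eq, PiLp.add_apply, PiLp.smul_apply, smul_eq_mul]
  linarith

lemma abs_cos_lt_one_of_mem_Ioo (hθ : θ ∈ Ioo 0 π) : |Real.cos θ| < 1 := by
  rw [← sq_lt_one_iff_abs_lt_one]
  nlinarith [Real.sin_pos_of_pos_of_lt_pi hθ.1 hθ.2, Real.sin_sq_add_cos_sq θ]

lemma sphCap_subset_closure_inter_openConeCap (hθ : θ ∈ Ioo 0 π) :
    sphCap n θ ⊆ closure (sphCap n θ ∩ openConeCap n θ) := by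
  intro u hu
  set z : ℝ → V n := fun t => (1 - t) • u + t • Etop n
  have hz : ∀ t ∈ Ioo (0 : ℝ) 1, z t ∈ openConeCap n θ := fun t ht =>
    openSegment_subset_openConeCap hu norm_etop (by simpa using abs_cos_le_one θ)
      (Or.inr (by simpa using abs_cos_lt_one_of_mem_Ioo hθ))
      ⟨1 - t, t, by linarith [ht.2], ht.1, by ring, rfl⟩
  have hcont : ContinuousAt (fun t => ‖z t‖⁻¹ • z t) 0 := by
    have hzc : Continuous z := by fun_prop
    exact ((hzc.norm.continuousAt).inv₀ (by simp [z, hu.1])).smul hzc.continuousAt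
  refine mem_closure_of_tendsto ?_ ?_ (f := fun t => ‖z t‖⁻¹ • z t) (b := 𝓝[>] (0 : ℝ))
  · simpa [z, hu.1] using hcont.tendsto.mono_left nhdsWithin_le_nhds
  · filter_upwards [Ioo_mem_nhdsGT one_pos] with t ht
    exact normalize_mem_sphCap_inter_openConeCap (hz t ht)

lemma exists_vertical_chord (hθ : θ ∈ Ioo 0 π) {u : V n}
    (hu : u ∈ sphCap n θ) (hu' : u ∈ openConeCap n θ) (hue : u ≠ Etop n) :
    ∃ q ∈ sphCapBdry n θ, ∃ l : ℝ, 0 < l ∧ ∃ τ : ℝ, 0 < τ ∧ l • u - q = τ • Etop n ∧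
      openSegment ℝ q (l • u) ⊆ openConeCap n θ := by
  set b := u (Fin.last n)
  set h := u - b • Etop n
  have hh_last : h (Fin.last n) = 0 := by simp [h, b]
  have hh : h ≠ 0 := by
    intro h0
    have hub : u = b • Etop n := sub_eq_zero.1 h0
    have hb : |b| = 1 := by
      have := hu.1
      rwa [hub, norm_smul, norm_etop, mul_one, Real.norm_eq_abs] at this
    rcases (abs_eq zero_le_one).1 hb with hb | hb
    · exact hue (by rw [hub, hb, one_smul])
    · have := (mem_openConeCap_iff_of_norm_eq_one hu.1).1 hu'
      linarith [Real.neg_one_le_cos θ]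
  have hr : 0 < ‖h‖ := norm_pos_iff.2 hh
  set m := ‖h‖⁻¹ • h
  have hm : ‖m‖ = 1 := norm_smul_inv_norm hh
  have hm_last : m (Fin.last n) = 0 := by simp [m, hh_last]
  set l := Real.sin θ / ‖h‖
  have hl : 0 < l := div_pos (Real.sin_pos_of_pos_of_lt_pi hθ.1 hθ.2) hr
  have hlu : l • u = Real.sin θ • m + (l * b) • Etop n := by
    rw [← sub_add_cancel u (b • Etop n)]
    simp only [m, l, h, smul_add, smul_smul, div_eq_mul_inv]
  have hmem : ∀ t, Real.sin θ • m + t • Etop n ∈ openConeCap n θ ↔ Real.cos θ < t :=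
    smul_add_smul_mem_openConeCap_iff hθ hm hm_last
  have htop : Real.cos θ < l * b := (hmem _).1 (hlu ▸ smul_mem_openConeCap hu' hl)
  refine ⟨Real.sin θ • m + Real.cos θ • Etop n, ⟨?_, by simp [hm_last]⟩, l, hl, l * b - Real.cos θ,
    sub_pos.2 htop, by rw [hlu]; module, ?_⟩
  · rw [← pow_eq_one_iff_of_nonneg (norm_nonneg _) two_ne_zero,
      norm_sq_smul_add_smul_etop hm hm_last, Real.sin_sq_add_cos_sq]
  · rintro _ ⟨α, β, hα, hβ, hαβ, rfl⟩
    have hcomb : α • (Real.sin θ • m + Real.cos θ • Etop n) + β • l • u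
        = Real.sin θ • m + (α * Real.cos θ + β * (l * b)) • Etop n := by
      rw [hlu]; linear_combination (norm := module) hαβ • (Real.sin θ • m)
    rw [hcomb, hmem]
    linear_combination mul_lt_mul_of_pos_left htop hβ - Real.cos θ * hαβ

end CapGeometry

section HomogeneousExtension

variable {n : ℕ} {θ : ℝ} {G : V n → ℝ} (hG : ∀ x ∈ coneCap n θ, ContDiffAt ℝ 2 G x)
  (hhom : ∀ l : ℝ, 0 < l → ∀ u ∈ sphCap n θ, G (l • u) = l * G u) (hτ : TauNonneg n θ G)

include hhom in
lemma apply_smul_of_mem_coneCap {x : V n} (hx : x ∈ coneCap n θ) {l : ℝ} (hl : 0 < l) :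
    G (l • x) = l * G x := by
  obtain ⟨l₀, hl₀, u, hu, rfl⟩ := hx
  rw [smul_smul, hhom _ (mul_pos hl hl₀) u hu, hhom l₀ hl₀ u hu, mul_assoc]

include hG hhom

lemma fderiv_apply_self_of_mem_coneCap {x : V n} (hx : x ∈ coneCap n θ) : fderiv ℝ G x x = G x :=
  fderiv_apply_self_of_homogeneous (fun _ hl => apply_smul_of_mem_coneCap hhom hx hl)
    ((hG x hx).differentiableAt two_ne_zero)

lemma fderiv_smul_of_mem_openConeCap {x : V n} (hx : x ∈ openConeCap n θ) {l : ℝ} (hl : 0 < l) :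
    fderiv ℝ G (l • x) = fderiv ℝ G x := by
  have hdiff : ∀ y ∈ openConeCap n θ, DifferentiableAt ℝ G y := fun y hy =>
    (hG y (openConeCap_subset_coneCap hy)).differentiableAt two_ne_zero
  have hnear : ∀ᶠ z in 𝓝 x, G (l • z) = l • G z :=
    eventually_of_mem (isOpen_openConeCap.mem_nhds hx) fun z hz =>
      apply_smul_of_mem_coneCap hhom (openConeCap_subset_coneCap hz) hl
  exact smul_right_injective _ hl.ne' <|
    smul_fderiv_smul_eq_of_eventually hnear (hdiff x hx) (hdiff _ (smul_mem_openConeCap hx hl))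

include hτ

lemma hessian_nonneg_of_mem_openConeCap {x : V n} (hx : x ∈ openConeCap n θ) (y : V n) :
    0 ≤ fderiv ℝ (fderiv ℝ G) x y y := by
  obtain ⟨hq, hq'⟩ := normalize_mem_sphCap_inter_openConeCap hx
  have hl : 0 < ‖x‖ := norm_pos_iff.2 (ne_zero_of_mem_openConeCap hx)
  have hxq : ‖x‖ • ‖x‖⁻¹ • x = x := smul_inv_smul₀ hl.ne' x
  have hdiff : ∀ z ∈ openConeCap n θ, DifferentiableAt ℝ (fderiv ℝ G) z := fun z hz =>
    ((hG z (openConeCap_subset_coneCap hz)).fderiv_right (m := 1) le_rfl).differentiableAt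
      one_ne_zero
  -- `fderiv ℝ G` is homogeneous of degree `0`, so its derivative scales by `‖x‖⁻¹`
  have hnear : ∀ᶠ z in 𝓝 (‖x‖⁻¹ • x), fderiv ℝ G (‖x‖ • z) = (1 : ℝ) • fderiv ℝ G z :=
    eventually_of_mem (isOpen_openConeCap.mem_nhds hq') fun z hz => by
      rw [one_smul, fderiv_smul_of_mem_openConeCap hG hhom hz hl]
  have hscale := smul_fderiv_smul_eq_of_eventually hnear (hdiff _ hq')
    (by rw [hxq]; exact hdiff x hx)
  rw [hxq, one_smul] at hscale
  have hτq : 0 ≤ ‖x‖ * fderiv ℝ (fderiv ℝ G) x y y := by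
    have := hτ _ hq y
    rw [hessQ, ← hscale] at this
    simpa using this
  exact nonneg_of_mul_nonneg_right hτq hl

lemma contDiffAt_and_hessian_nonneg_of_openSegment_subset {a b : V n}
    (ha : a ∈ coneCap n θ) (hb : b ∈ coneCap n θ) (hab : openSegment ℝ a b ⊆ openConeCap n θ) :
    (∀ x ∈ segment ℝ a b, ContDiffAt ℝ 2 G x) ∧
      ∀ x ∈ openSegment ℝ a b, 0 ≤ fderiv ℝ (fderiv ℝ G) x (b - a) (b - a) :=
  ⟨fun x hx => hG x (segment_subset_coneCap ha hb hab hx),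
    fun _ hx => hessian_nonneg_of_mem_openConeCap hG hhom hτ (hab hx) _⟩

lemma fderiv_etop_nonneg (hθ : θ ∈ Ioo 0 π) (hcap : IsCapillaryF n θ G) (hE : 0 ≤ G (Etop n))
    {u : V n} (hu : u ∈ sphCap n θ) (hu' : u ∈ openConeCap n θ) :
    0 ≤ fderiv ℝ G u (Etop n) := by
  by_cases hue : u = Etop n
  · subst hue
    rwa [fderiv_apply_self_of_mem_coneCap hG hhom (sphCap_subset_coneCap hu)]
  obtain ⟨q, hq, l, hl, τ, hτpos, hchord, hseg⟩ := exists_vertical_chord hθ hu hu' hue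
  have hq_cap : q ∈ sphCap n θ := ⟨hq.1, hq.2.ge⟩
  obtain ⟨hsmooth, hhess⟩ := contDiffAt_and_hessian_nonneg_of_openSegment_subset hG hhom hτ
    (sphCap_subset_coneCap hq_cap)
    (openConeCap_subset_coneCap (smul_mem_openConeCap hu' hl)) hseg
  -- `∂_{n+1} G` increases up the vertical chord from its value `0` on the boundary circle
  have hmono := fderiv_apply_sub_le_of_hessian_nonneg hsmooth hhess
  rw [hchord, fderiv_smul_of_mem_openConeCap hG hhom hu' hl, map_smul, map_smul, hcap q hq,
    smul_zero, smul_eq_mul] at hmono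
  exact nonneg_of_mul_nonneg_right hmono hτpos

lemma norm_gradient_sub_le_of_mem_openConeCap (hθ : θ ∈ Ioo 0 π) (hcap : IsCapillaryF n θ G)
    {C : ℝ} (hC : 0 ≤ C)
    (hE : 0 ≤ G (Etop n)) (hGC : ∀ v ∈ sphCap n θ, G v ≤ C)
    {u : V n} (hu : u ∈ sphCap n θ) (hu' : u ∈ openConeCap n θ) :
    ‖gradient G u - G u • u‖ ≤ C / Real.sin θ := by
  have hsin : 0 < Real.sin θ := Real.sin_pos_of_pos_of_lt_pi hθ.1 hθ.2
  have heuler := fderiv_apply_self_of_mem_coneCap hG hhom (sphCap_subset_coneCap hu)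
  set T := gradient G u - G u • u
  have hTu : ⟪T, u⟫ = 0 := by
    rw [inner_sub_left, inner_gradient_left, heuler, real_inner_smul_left,
      real_inner_self_eq_norm_sq, hu.1]
    ring
  rcases eq_or_ne T 0 with hT | hT
  · rw [hT, norm_zero]
    positivity
  set w := ‖T‖⁻¹ • T
  have hw : fderiv ℝ G u w = ‖T‖ := by
    rw [← inner_gradient_left, show gradient G u = T + G u • u by simp [T], inner_add_left,
      real_inner_smul_left, real_inner_smul_right, real_inner_smul_right, real_inner_comm T u, hTu,
      real_inner_self_eq_norm_sq, mul_zero, mul_zero, add_zero]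
    field_simp
  have hw1 : ‖w‖ = 1 := norm_smul_inv_norm hT
  clear_value w
  obtain ⟨μ, hμ, hv, hv_last⟩ := exists_nonneg_norm_smul_add_smul_eq_one hw1
    norm_etop (Real.sin_sq_add_cos_sq θ)
  set v := Real.sin θ • w + μ • Etop n
  rw [inner_etop] at hv_last
  have hv_cap : v ∈ sphCap n θ := ⟨hv, (le_abs_self _).trans hv_last⟩
  obtain ⟨hsmooth, hhess⟩ := contDiffAt_and_hessian_nonneg_of_openSegment_subset hG hhom hτ
    (sphCap_subset_coneCap hu) (sphCap_subset_coneCap hv_cap)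
    (openSegment_subset_openConeCap hu hv hv_last
      (Or.inl ((mem_openConeCap_iff_of_norm_eq_one hu.1).1 hu')))
  have htangent := add_fderiv_apply_sub_le_of_hessian_nonneg hsmooth hhess
  rw [map_sub, map_add, map_smul, map_smul, hw, heuler, smul_eq_mul, smul_eq_mul] at htangent
  rw [le_div_iff₀ hsin]
  nlinarith [hGC v hv_cap, mul_nonneg hμ (fderiv_etop_nonneg hG hhom hτ hθ hcap hE hu hu')]

end HomogeneousExtension

lemma continuousAt_gradient_sub_smul {E : Type*} [NormedAddCommGroup E] [InnerProductSpace ℝ E]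
    [CompleteSpace E] {f : E → ℝ} {x : E} (hf : ContDiffAt ℝ 1 f x) :
    ContinuousAt (fun y => gradient f y - f y • y) x :=
  ((InnerProductSpace.toDual ℝ E).symm.continuous.continuousAt.comp
    (hf.continuousAt_fderiv one_ne_zero)).sub (hf.continuousAt.smul continuousAt_id)

theorem capillary_gradient_estimate_general (n : ℕ) (θ : ℝ) (hθ : θ ∈ Ioo 0 π)
    (C : ℝ) (hC : 0 < C)
    (s G : V n → ℝ) (hs : IsHomExt n θ 2 s G) (hcap : IsCapillaryF n θ G)
    (hτ : TauPos n θ G)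
    (hbd : ∀ ζ ∈ capCap n θ, 0 < s ζ ∧ s ζ ≤ C) :
    ∀ u ∈ sphCap n θ, ‖gradient G u - G u • u‖ ≤ C / Real.sin θ := by
  obtain ⟨⟨U, hU, hUc, hGU⟩, hhom, hsG⟩ := hs
  have hG : ∀ x ∈ coneCap n θ, ContDiffAt ℝ 2 G x := fun x hx =>
    hGU.contDiffAt (hU.mem_nhds (hUc hx))
  have hbdG : ∀ u ∈ sphCap n θ, 0 < G u ∧ G u ≤ C := fun u hu => by
    have hζ : u - Real.cos θ • Etop n ∈ capCap n θ := ⟨by simpa using hu.2, by simpa using hu.1⟩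
    rw [← sub_add_cancel u (Real.cos θ • Etop n), hsG _ hζ]
    exact hbd _ hζ
  have hE : Etop n ∈ sphCap n θ := ⟨norm_etop, by simpa using Real.cos_le_one θ⟩
  intro u hu
  exact ((continuousAt_gradient_sub_smul ((hG u (sphCap_subset_coneCap hu)).of_le
    one_le_two)).norm.continuousWithinAt).closure_le
    (sphCap_subset_closure_inter_openConeCap hθ hu) continuousWithinAt_const
    fun v hv => norm_gradient_sub_le_of_mem_openConeCap hG hhom hτ.1 hθ hcap hC.le
      (hbdG _ hE).1.le (fun v hv => (hbdG v hv).2) hv.1 hv.2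

/-- gradient estimate for capillary support functions. -/
theorem capillary_gradient_estimate (n : ℕ) (hn : 1 ≤ n) (θ : ℝ) (hθ : θ ∈ Ioo 0 π)
    (C : ℝ) (hC : 0 < C)
    (s G : V n → ℝ) (hs : IsHomExt n θ 2 s G) (hcap : IsCapillaryF n θ G)
    (hτ : TauPos n θ G)
    (hbd : ∀ ζ ∈ capCap n θ, 0 < s ζ ∧ s ζ ≤ C) :
    ∀ u ∈ sphCap n θ, ‖gradient G u - G u • u‖ ≤ C / Real.sin θ :=
  capillary_gradient_estimate_general n θ hθ C hC s G hs hcap hτ hbd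
end
end
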